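/- There exists a constant C > 0 such that for all t ∈ ℝ and all z ∈ ℂ with Re(z) < 0 and |z| ≥ |t|, one has |R(t,z) + z| ≤ C t²/|z| and Im(R(t,z)) ≥ −Im(z) − C t²/|z|, where R(t,z) := (t² + z²)^{1/2}. -/

import Mathlib

/-
Write `R = R(t,z)`. Since `(R - z)(R + z) = R² - z² = t²`, the first bound reduces to
`|R - z| ≥ |z|`. The principal square root has `Re R ≥ 0`, and `Im R` has the sign of
`Im(t² + z²) = 2 Re z Im z`, which is opposite to that of `Im z` when `Re z < 0`. Hence the real
inner product `⟪R, z⟫ = Re R Re z + Im R Im z` is `≤ 0`, and `|R - z|² = |R|² - 2⟪R, z⟫ + |z|²`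
is at least `|z|²`. The bound on `Im R` then follows from `|Im (R + z)| ≤ |R + z|`.
-/

open Complex

noncomputable def Rtz (t : ℝ) (z : ℂ) : ℂ := ((t : ℂ) ^ 2 + z ^ 2) ^ ((1 : ℂ) / 2)

theorem norm_le_norm_sub_of_inner_nonpos {F : Type*} [NormedAddCommGroup F]
    [InnerProductSpace ℝ F] {x y : F} (h : inner ℝ x y ≤ 0) : ‖y‖ ≤ ‖x - y‖ := by
  refine (pow_le_pow_iff_left₀ (norm_nonneg _) (norm_nonneg _) two_ne_zero).1 ?_
  rw [norm_sub_sq_real]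
  nlinarith [sq_nonneg ‖x‖]

namespace Complex

theorem re_cpow_inv_two_nonneg (w : ℂ) : 0 ≤ (w ^ (2⁻¹ : ℂ)).re := by
  rw [cpow_inv_two_re]
  positivity

theorem im_cpow_inv_two_mul_im_nonneg (w : ℂ) : 0 ≤ (w ^ (2⁻¹ : ℂ)).im * w.im := by
  rcases le_or_gt 0 w.im with h | h
  · rw [cpow_inv_two_im_eq_sqrt h]
    positivity
  · rw [cpow_inv_two_im_eq_neg_sqrt h]
    exact mul_nonneg_of_nonpos_of_nonpos (neg_nonpos.2 (Real.sqrt_nonneg _)) h.le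

theorem norm_le_norm_cpow_inv_two_sub {c : ℝ} {z : ℂ} (hz : z.re < 0) :
    ‖z‖ ≤ ‖((c : ℂ) + z ^ 2) ^ (2⁻¹ : ℂ) - z‖ := by
  have him_sign := im_cpow_inv_two_mul_im_nonneg ((c : ℂ) + z ^ 2)
  have hw_im : ((c : ℂ) + z ^ 2).im = 2 * z.re * z.im := by
    simp only [add_im, ofReal_im, sq, mul_im]
    ring
  rw [hw_im] at him_sign
  have hre := re_cpow_inv_two_nonneg ((c : ℂ) + z ^ 2)
  apply norm_le_norm_sub_of_inner_nonpos
  rw [Complex.inner, mul_re, conj_re, conj_im]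
  nlinarith [mul_nonpos_of_nonneg_of_nonpos hre hz.le]

end Complex

theorem Rtz_eq_cpow_inv_two (t : ℝ) (z : ℂ) : Rtz t z = ((t : ℂ) ^ 2 + z ^ 2) ^ (2⁻¹ : ℂ) := by
  rw [Rtz, one_div]

theorem Rtz_sub_mul_Rtz_add (t : ℝ) (z : ℂ) : (Rtz t z - z) * (Rtz t z + z) = (t : ℂ) ^ 2 := by
  have hsq : Rtz t z ^ 2 = (t : ℂ) ^ 2 + z ^ 2 := by
    rw [Rtz_eq_cpow_inv_two]
    exact cpow_ofNat_inv_pow _ 2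
  linear_combination hsq

theorem norm_Rtz_add_le (t : ℝ) {z : ℂ} (hz : z.re < 0) : ‖Rtz t z + z‖ ≤ t ^ 2 / ‖z‖ := by
  have hz_pos : 0 < ‖z‖ := norm_pos_iff.2 fun h => by simp [h] at hz
  have hsub : ‖z‖ ≤ ‖Rtz t z - z‖ := by
    rw [Rtz_eq_cpow_inv_two, ← ofReal_pow]
    exact norm_le_norm_cpow_inv_two_sub hz
  have hprod : ‖Rtz t z - z‖ * ‖Rtz t z + z‖ = t ^ 2 := by
    rw [← norm_mul, Rtz_sub_mul_Rtz_add, ← ofReal_pow, norm_real, Real.norm_of_nonneg (sq_nonneg t)]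
  rw [le_div_iff₀ hz_pos, ← hprod, mul_comm]
  exact mul_le_mul_of_nonneg_right hsub (norm_nonneg _)

/-- There exists `C > 0` such that, for all `t ∈ ℝ` and `z ∈ ℂ` with `Re z < 0` and
`|z| ≥ |t|`, one has `|R(t,z) + z| ≤ C t²/|z|` and `Im(R(t,z)) ≥ −Im(z) − C t²/|z|`. -/
theorem stmt_3 :
    ∃ C > (0 : ℝ), ∀ (t : ℝ) (z : ℂ), z.re < 0 → |t| ≤ ‖z‖ →
      ‖Rtz t z + z‖ ≤ C * t ^ 2 / ‖z‖ ∧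
      -z.im - C * t ^ 2 / ‖z‖ ≤ (Rtz t z).im := by
  refine ⟨1, one_pos, fun t z hz _ => ?_⟩
  have hnorm := norm_Rtz_add_le t hz
  have him : -(Rtz t z + z).im ≤ ‖Rtz t z + z‖ := (neg_le_abs _).trans (abs_im_le_norm _)
  rw [add_im] at him
  rw [one_mul]
  exact ⟨hnorm, by linarith⟩
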